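/- arXiv:2605.02211 — 2 statements merged into one kernel-verified Lean document; each statement's English description precedes it below -/
import Mathlib

section
/- Let M = M_1 ⊗ ⋯ ⊗ M_r where each M_i ∈ ℂ^{2×2} is a nonzero PSD matrix of rank 1. Then for all ε ∈ (0,1), every ε-sparsifier of the complete r-partite M-Hamiltonian on parts of size ⌊n/r⌋ must have full support, and hence SPR(M, n, ε) ≥ ⌊n/r⌋^r. -/
open scoped Classical ComplexOrder
open Matrix

/-- The local operator `(M 0 ⊗ ⋯ ⊗ M (r-1))|_T ⊗ Id` on qubits indexed by `V`:
`M k` acts on qubit `T k` and the identity acts elsewhere. -/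
noncomputable def locOpParts {V : Type*} [Fintype V] [DecidableEq V] {r : ℕ}
    (M : Fin r → Matrix (Fin 2) (Fin 2) ℂ) (T : Fin r → V) :
    Matrix (V → Fin 2) (V → Fin 2) ℂ :=
  Matrix.of fun x y =>
    if ∀ v : V, v ∉ Set.range T → x v = y v then
      ∏ k : Fin r, M k (x (T k)) (y (T k))
    else 0

/-!
Fix a term `g₀` of the complete `r`-partite Hamiltonian and test the sparsifier on a product
state: on each qubit `(k, g₀ k)` put a vector on which `M k` is positive, and on every other
qubit `(k, j)` a nonzero vector of the kernel of `M k`, which exists since `M k` has rank one.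
The quadratic form of a local term on a product state is the product of the one-qubit forms,
so every term `g ≠ g₀` vanishes on this state (it acts by `M k` on the qubit `(k, g k)`, which
carries a kernel vector), while the term `g₀` is positive. The lower sparsifier bound then reads
`(1 - ε) ⟨ψ, M_{g₀} ψ⟩ ≤ w g₀ ⟨ψ, M_{g₀} ψ⟩`, hence `w g₀ ≥ 1 - ε > 0`.
-/

namespace Matrix

section PiKron

variable {ι κ R : Type*} [Fintype ι] [CommSemiring R]

/-- The Kronecker product `⨂ i, A i` of a finite family of square matrices. -/
def piKron (A : ι → Matrix κ κ R) : Matrix (ι → κ) (ι → κ) R :=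
  of fun x y => ∏ i, A i (x i) (y i)

def piKronVec (φ : ι → κ → R) : (ι → κ) → R :=
  fun x => ∏ i, φ i (x i)

theorem star_piKronVec_dotProduct_piKron_mulVec [DecidableEq ι] [Fintype κ] [StarRing R]
    (A : ι → Matrix κ κ R)
    (φ : ι → κ → R) :
    star (piKronVec φ) ⬝ᵥ piKron A *ᵥ piKronVec φ = ∏ i, star (φ i) ⬝ᵥ A i *ᵥ φ i := by
  calc star (piKronVec φ) ⬝ᵥ piKron A *ᵥ piKronVec φ
      = ∑ x : ι → κ, ∑ y : ι → κ, ∏ i, star (φ i (x i)) * (A i (x i) (y i) * φ i (y i)) := by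
        simp only [dotProduct, mulVec, piKron, piKronVec, of_apply, Pi.star_apply, star_prod,
          Finset.mul_sum, Finset.prod_mul_distrib]
    _ = ∏ i, ∑ a, ∑ b, star (φ i a) * (A i a b * φ i b) := by
        simp only [Fintype.prod_sum]
    _ = ∏ i, star (φ i) ⬝ᵥ A i *ᵥ φ i := by
        simp only [dotProduct, mulVec, Pi.star_apply, Finset.mul_sum]

end PiKron

theorem PosSemidef.exists_dotProduct_mulVec_pos {𝕜 n : Type*} [RCLike 𝕜] [Fintype n]
    {A : Matrix n n 𝕜} (hA : A.PosSemidef) (h : A ≠ 0) : ∃ v, 0 < star v ⬝ᵥ A *ᵥ v := by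
  obtain ⟨i, hi⟩ : ∃ i, A *ᵥ Pi.single i 1 ≠ 0 := by
    by_contra! h'
    exact h (ext_of_mulVec_single fun i => by rw [h' i, zero_mulVec])
  exact ⟨_, (hA.dotProduct_mulVec_nonneg _).lt_of_ne
    (Ne.symm ((hA.dotProduct_mulVec_zero_iff _).not.mpr hi))⟩

theorem exists_mulVec_eq_zero_of_rank_lt {K n : Type*} [Field K] [Fintype n] [DecidableEq n]
    {A : Matrix n n K} (h : A.rank < Fintype.card n) : ∃ v ≠ 0, A *ᵥ v = 0 := by
  refine exists_mulVec_eq_zero_iff.mpr (by_contra fun hdet => h.ne ?_)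
  exact rank_of_isUnit A ((isUnit_iff_isUnit_det A).mpr (Ne.isUnit hdet))

end Matrix

/-- `Function.extend T M 1` puts `M k` on qubit `T k` and the identity on every other qubit. -/
theorem locOpParts_eq_piKron {V : Type*} [Fintype V] [DecidableEq V] {r : ℕ}
    (M : Fin r → Matrix (Fin 2) (Fin 2) ℂ) {T : Fin r → V} (hT : T.Injective) :
    locOpParts M T = piKron (Function.extend T M 1) := by
  have hcompl : ∀ v ∈ (Finset.univ.map ⟨T, hT⟩)ᶜ, v ∉ Set.range T := by simp
  ext x y
  rw [locOpParts, piKron, of_apply, of_apply,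
    ← Finset.prod_mul_prod_compl (Finset.univ.map ⟨T, hT⟩), Finset.prod_map]
  simp only [Function.Embedding.coeFn_mk, hT.extend_apply]
  split_ifs with hxy
  · have hone : ∏ v ∈ (Finset.univ.map ⟨T, hT⟩)ᶜ, Function.extend T M 1 v (x v) (y v) = 1 :=
      Finset.prod_eq_one fun v hv => by
        rw [Function.extend_apply' _ _ _ (hcompl v hv), Pi.one_apply, hxy v (hcompl v hv),
          one_apply_eq]
    rw [hone, mul_one]
  · obtain ⟨v, hv, hxyv⟩ := not_forall₂.mp hxy
    refine (mul_eq_zero_of_right _ (Finset.prod_eq_zero (i := v) (by simpa using hv) ?_)).symm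
    rw [Function.extend_apply' _ _ _ hv, Pi.one_apply, one_apply_ne hxyv]

theorem exists_state_isolating_term {r m : ℕ} (M : Fin r → Matrix (Fin 2) (Fin 2) ℂ)
    (hPSD : ∀ k, (M k).PosSemidef) (hne : ∀ k, M k ≠ 0) (hsing : ∀ k, ∃ u ≠ 0, M k *ᵥ u = 0)
    (g₀ : Fin r → Fin m) :
    ∃ ψ : (Fin r × Fin m → Fin 2) → ℂ,
      (∀ g ≠ g₀, star ψ ⬝ᵥ (locOpParts M (fun k => (k, g k))).mulVec ψ = 0) ∧
      0 < star ψ ⬝ᵥ (locOpParts M (fun k => (k, g₀ k))).mulVec ψ := by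
  have hT : ∀ g : Fin r → Fin m, (fun k => ((k, g k) : Fin r × Fin m)).Injective :=
    fun _ _ _ h => congrArg Prod.fst h
  choose v hv using fun k => (hPSD k).exists_dotProduct_mulVec_pos (hne k)
  choose u hu0 hu using hsing
  refine ⟨piKronVec fun p => if p.2 = g₀ p.1 then v p.1 else u p.1, fun g hg => ?_, ?_⟩
  · obtain ⟨k, hk⟩ := Function.ne_iff.mp hg
    rw [locOpParts_eq_piKron M (hT g), star_piKronVec_dotProduct_piKron_mulVec]
    refine Finset.prod_eq_zero (Finset.mem_univ (k, g k)) ?_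
    rw [(hT g).extend_apply M 1 k]
    simp [hk, hu]
  · rw [locOpParts_eq_piKron M (hT g₀), star_piKronVec_dotProduct_piKron_mulVec]
    refine Finset.prod_pos fun ⟨k, j⟩ _ => ?_
    by_cases hj : j = g₀ k
    · subst hj
      rw [(hT g₀).extend_apply M 1 k]
      simpa using hv k
    · have hkj : (k, j) ∉ Set.range fun k => ((k, g₀ k) : Fin r × Fin m) := by
        rintro ⟨k', hk'⟩
        cases hk'
        exact hj rfl
      rw [Function.extend_apply' _ _ _ hkj]
      simpa [hj] using PosDef.one.dotProduct_mulVec_pos (hu0 k)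

theorem stmt4_general (r m : ℕ) (ε : ℝ) (hε1 : ε < 1)
    (M : Fin r → Matrix (Fin 2) (Fin 2) ℂ)
    (hPSD : ∀ k, (M k).PosSemidef) (hne : ∀ k, M k ≠ 0) (hrk : ∀ k, (M k).rank = 1)
    (w : (Fin r → Fin m) → ℝ)
    (hspars : ∀ ψ : (Fin r × Fin m → Fin 2) → ℂ,
      (1 - ε) * (∑ g : Fin r → Fin m,
          (star ψ ⬝ᵥ (locOpParts M (fun k => (k, g k))).mulVec ψ).re) ≤
        (∑ g : Fin r → Fin m,
          w g * (star ψ ⬝ᵥ (locOpParts M (fun k => (k, g k))).mulVec ψ).re) ∧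
      (∑ g : Fin r → Fin m,
          w g * (star ψ ⬝ᵥ (locOpParts M (fun k => (k, g k))).mulVec ψ).re) ≤
        (1 + ε) * (∑ g : Fin r → Fin m,
          (star ψ ⬝ᵥ (locOpParts M (fun k => (k, g k))).mulVec ψ).re)) :
    ∀ g : Fin r → Fin m, w g ≠ 0 := by
  intro g₀
  obtain ⟨ψ, hoff, hon⟩ := exists_state_isolating_term M hPSD hne
    (fun k => exists_mulVec_eq_zero_of_rank_lt (by simp [hrk k])) g₀
  have hlow := (hspars ψ).1
  rw [Fintype.sum_eq_single g₀ fun g hg => by simp [hoff g hg],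
    Fintype.sum_eq_single g₀ fun g hg => by simp [hoff g hg]] at hlow
  have hw₀ : 1 - ε ≤ w g₀ := le_of_mul_le_mul_right hlow (Complex.pos_iff.mp hon).1
  exact ne_of_gt (by linarith)

/-- Let `M = M_1 ⊗ ⋯ ⊗ M_r` with each `M_i` a nonzero rank-1 PSD 2×2
matrix.  Consider the complete r-partite M-Hamiltonian on parts of size `m = ⌊n/r⌋`
(qubits `Fin r × Fin m`, one term for every `g : Fin r → Fin m`, acting on the tuple
`(k, g k)_k`).  Then every ε-sparsifier `w` (with `ε ∈ (0,1)`) has full support, i.e.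
`w g ≠ 0` for every `g`; hence `SPR(M, n, ε) ≥ ⌊n/r⌋^r`. -/
theorem stmt4 (r m : ℕ) (hr : 1 ≤ r) (ε : ℝ) (hε0 : 0 < ε) (hε1 : ε < 1)
    (M : Fin r → Matrix (Fin 2) (Fin 2) ℂ)
    (hPSD : ∀ k, (M k).PosSemidef) (hne : ∀ k, M k ≠ 0) (hrk : ∀ k, (M k).rank = 1)
    (w : (Fin r → Fin m) → ℝ) (hw : ∀ g, 0 ≤ w g)
    (hspars : ∀ ψ : (Fin r × Fin m → Fin 2) → ℂ,
      (1 - ε) * (∑ g : Fin r → Fin m,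
          (star ψ ⬝ᵥ (locOpParts M (fun k => (k, g k))).mulVec ψ).re) ≤
        (∑ g : Fin r → Fin m,
          w g * (star ψ ⬝ᵥ (locOpParts M (fun k => (k, g k))).mulVec ψ).re) ∧
      (∑ g : Fin r → Fin m,
          w g * (star ψ ⬝ᵥ (locOpParts M (fun k => (k, g k))).mulVec ψ).re) ≤
        (1 + ε) * (∑ g : Fin r → Fin m,
          (star ψ ⬝ᵥ (locOpParts M (fun k => (k, g k))).mulVec ψ).re)) :
    ∀ g : Fin r → Fin m, w g ≠ 0 :=
  stmt4_general r m ε hε1 M hPSD hne hrk w hspars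
end

section
/- Let M ∈ ℂ^{4×4} be Hermitian PSD and suppose some u ∈ span(M) (a vector in the column span of M, viewed as a function on {0,1}²) is nonsingular, i.e., det [[u(00), u(01)], [u(10), u(11)]] ≠ 0. Let ψ ∈ ℂ^{2^n} be a state with ⟨ψ, (M|_{(1,2)} ⊗ Id)ψ⟩ = 0 and ⟨ψ, (M|_{(1,3)} ⊗ Id)ψ⟩ = 0. Then ψ is invariant under the unitary swapping qubits 2 and 3. -/
/-!
Since `M` is positive semidefinite, the energy of `M|_T ⊗ Id` is, up to the factor `2 ^ |T|`, the
sum over `z` of `⟨ψ_z, M ψ_z⟩`, so zero energy puts every slice `ψ_z` (the qubits outside `T`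
fixed to `z`) in `ker M`, hence orthogonal to `u`. Writing `g a b c` for the values of `ψ` on the
three qubits, the pairs `(0,1)` and `(0,2)` give the relations `∑ ū(ab) g(a,b,c) = 0` for each
`c` and `∑ ū(ac) g(a,b,c) = 0` for each `b`. Their differences say that the vector
`a ↦ g(a,0,1) - g(a,1,0)` is killed by the matrix `(ū(ab))`, which is nonsingular, so
`g(a,b,c) = g(a,c,b)`.
-/

open scoped Classical ComplexOrder
open Matrix

/-- The local operator `M|_T ⊗ Id` on an `n`-qubit system. -/
noncomputable def localOp {n r : ℕ} (M : Matrix (Fin r → Fin 2) (Fin r → Fin 2) ℂ)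
    (T : Fin r → Fin n) : Matrix (Fin n → Fin 2) (Fin n → Fin 2) ℂ :=
  Matrix.of fun x y =>
    if ∀ i : Fin n, i ∉ Set.range T → x i = y i then M (x ∘ T) (y ∘ T) else 0

open Function

section Extend

variable {α β γ : Type*}

theorem Function.extend_extend (f : α → β) (g g' : α → γ) (e : β → γ) :
    extend f g (extend f g' e) = extend f g e := by
  funext b
  by_cases hb : ∃ a, f a = b
  · simp only [extend_def, dif_pos hb]
  · simp only [extend_apply' _ _ _ hb]

theorem Function.extend_comp_apply (f : α → β) (e e' : β → γ) (a : α) :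
    extend f (e ∘ f) e' (f a) = e (f a) :=
  FactorsThrough.extend_apply (fun _ _ h => congrArg e h) e' a

theorem Function.eq_extend_comp_of_forall_notMem_range {f : α → β} {e e' : β → γ}
    (h : ∀ b, b ∉ Set.range f → e' b = e b) : e = extend f (e ∘ f) e' := by
  funext b
  by_cases hb : ∃ a, f a = b
  · obtain ⟨a, rfl⟩ := hb
    exact (extend_comp_apply f e e' a).symm
  · rw [extend_apply' _ _ _ hb, h b (by simpa using hb)]

theorem Function.extend_comp_self (f : α → β) (e : β → γ) : extend f (e ∘ f) e = e :=
  (eq_extend_comp_of_forall_notMem_range fun _ _ => rfl).symm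

end Extend

section Slice

variable {n r : ℕ} {T : Fin r → Fin n} (ψ : (Fin n → Fin 2) → ℂ)

/-- The restriction `ψ_z` of `ψ` to the qubits in `T`, the others being fixed to `z`. -/
noncomputable def slice (T : Fin r → Fin n) (z : Fin n → Fin 2) : (Fin r → Fin 2) → ℂ :=
  fun p => ψ (extend T p z)

theorem slice_extend (p : Fin r → Fin 2) (z : Fin n → Fin 2) :
    slice ψ T (extend T p z) = slice ψ T z := by
  unfold slice
  simp only [extend_extend]

theorem localOp_mulVec_apply (hT : Injective T) (M : Matrix (Fin r → Fin 2) (Fin r → Fin 2) ℂ)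
    (x : Fin n → Fin 2) : (localOp M T *ᵥ ψ) x = (M *ᵥ slice ψ T x) (x ∘ T) := by
  simp only [mulVec, dotProduct, localOp, of_apply, slice, ite_mul, zero_mul]
  rw [← Finset.sum_filter]
  refine Finset.sum_nbij' (· ∘ T) (extend T · x) (by simp) ?_ ?_ ?_ ?_
  · intro p _
    simpa using fun i hi => (extend_apply' p x i hi).symm
  · intro y hy
    exact (eq_extend_comp_of_forall_notMem_range (Finset.mem_filter.mp hy).2).symm
  · intro p _
    exact extend_comp hT p x
  · intro y hy
    rw [← eq_extend_comp_of_forall_notMem_range (Finset.mem_filter.mp hy).2]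

theorem sum_dotProduct_mulVec_slice (hT : Injective T) (M : Matrix (Fin r → Fin 2) (Fin r → Fin 2) ℂ) :
    ∑ z, star (slice ψ T z) ⬝ᵥ M *ᵥ slice ψ T z = 2 ^ r * (star ψ ⬝ᵥ localOp M T *ᵥ ψ) := by
  set K : (Fin n → Fin 2) → ℂ := fun x => star (ψ x) * (M *ᵥ slice ψ T x) (x ∘ T)
  have hK : ∀ z, star (slice ψ T z) ⬝ᵥ M *ᵥ slice ψ T z = ∑ p, K (extend T p z) := by
    intro z
    simp only [K, dotProduct, slice_extend, extend_comp hT, Pi.star_apply]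
    rfl
  have hinv : Involutive fun pz : (Fin r → Fin 2) × (Fin n → Fin 2) =>
      (pz.2 ∘ T, extend T pz.1 pz.2) := by
    rintro ⟨p, z⟩
    simp only [extend_comp hT, extend_extend, extend_comp_self]
  -- The involution trades `extend T p z` for `z`; the values of `z` on `T` are then free,
  -- whence the factor `2 ^ r`.
  calc ∑ z, star (slice ψ T z) ⬝ᵥ M *ᵥ slice ψ T z
      = ∑ pz : (Fin r → Fin 2) × (Fin n → Fin 2), K (extend T pz.1 pz.2) := by
        rw [Fintype.sum_prod_type_right]
        exact Finset.sum_congr rfl fun z _ => hK z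
    _ = ∑ pz : (Fin r → Fin 2) × (Fin n → Fin 2), K pz.2 := by
        rw [← Equiv.sum_comp (hinv.toPerm _)]
        simp only [Involutive.coe_toPerm, extend_extend, extend_comp_self]
    _ = 2 ^ r * (star ψ ⬝ᵥ localOp M T *ᵥ ψ) := by
        simp only [Fintype.sum_prod_type, Finset.sum_const, Finset.card_univ, Fintype.card_fun,
          Fintype.card_fin, nsmul_eq_mul, dotProduct, localOp_mulVec_apply ψ hT, Pi.star_apply, K]
        push_cast
        rfl

theorem mulVec_slice_eq_zero (hT : Injective T) {M : Matrix (Fin r → Fin 2) (Fin r → Fin 2) ℂ}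
    (hM : M.PosSemidef) (hψ : star ψ ⬝ᵥ localOp M T *ᵥ ψ = 0) (z : Fin n → Fin 2) :
    M *ᵥ slice ψ T z = 0 := by
  have hsum : ∑ w, star (slice ψ T w) ⬝ᵥ M *ᵥ slice ψ T w = 0 := by
    rw [sum_dotProduct_mulVec_slice ψ hT, hψ, mul_zero]
  refine (hM.dotProduct_mulVec_zero_iff _).mp ?_
  exact (Finset.sum_eq_zero_iff_of_nonneg fun w _ => hM.dotProduct_mulVec_nonneg _).mp hsum z
    (Finset.mem_univ z)

end Slice

theorem Matrix.IsHermitian.star_dotProduct_eq_zero {m R : Type*} [Fintype m] [CommRing R]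
    [StarRing R] {M : Matrix m m R} (hM : M.IsHermitian) {u s : m → R}
    (hu : u ∈ Set.range M.mulVec) (hs : M *ᵥ s = 0) : star u ⬝ᵥ s = 0 := by
  obtain ⟨v, rfl⟩ := hu
  rw [star_mulVec, ← dotProduct_mulVec, hM.eq, hs, dotProduct_zero]

theorem extend_pair_eq_update_update {n : ℕ} {i j : Fin n} (h : i ≠ j) (p : Fin 2 → Fin 2) (z : Fin n → Fin 2) :
    extend ![i, j] p z = update (update z i (p 0)) j (p 1) := by
  funext k
  by_cases hi : k = i
  · subst hi
    simpa [h] using (injective_pair_iff_ne.mpr h).extend_apply p z 0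
  by_cases hj : k = j
  · subst hj
    simpa using (injective_pair_iff_ne.mpr h).extend_apply p z 1
  · rw [extend_apply']
    · simp [hi, hj]
    · rintro ⟨a, rfl⟩
      fin_cases a <;> simp_all

theorem sum_star_mul_update_eq_zero {n : ℕ} {i j : Fin n} (h : i ≠ j)
    {M : Matrix (Fin 2 → Fin 2) (Fin 2 → Fin 2) ℂ} (hM : M.PosSemidef)
    {u : (Fin 2 → Fin 2) → ℂ} (hu : u ∈ Set.range M.mulVec) {ψ : (Fin n → Fin 2) → ℂ}
    (hψ : star ψ ⬝ᵥ localOp M ![i, j] *ᵥ ψ = 0) (z : Fin n → Fin 2) :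
    ∑ a, ∑ b, star (u ![a, b]) * ψ (update (update z i a) j b) = 0 := by
  have hT := injective_pair_iff_ne.mpr h
  have := hM.1.star_dotProduct_eq_zero hu (mulVec_slice_eq_zero ψ hT hM hψ z)
  rw [dotProduct, ← (finTwoArrowEquiv (Fin 2)).symm.sum_comp, Fintype.sum_prod_type] at this
  simpa [slice, extend_pair_eq_update_update h] using this

theorem eq_swap_of_det_ne_zero {R : Type*} [CommRing R] [NoZeroDivisors R]
    {W : Matrix (Fin 2) (Fin 2) R} (hW : W.det ≠ 0) {g : Fin 2 → Fin 2 → Fin 2 → R}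
    (h₁₂ : ∀ c, ∑ a, ∑ b, W a b * g a b c = 0) (h₁₃ : ∀ b, ∑ a, ∑ c, W a c * g a b c = 0)
    (a b c : Fin 2) : g a b c = g a c b := by
  -- `h₁₂ c - h₁₃ c` involves only these differences.
  have hd : (fun a => g a 0 1 - g a 1 0) ᵥ* W = 0 := by
    have e₀ := h₁₂ 0; have e₁ := h₁₂ 1; have f₀ := h₁₃ 0; have f₁ := h₁₃ 1
    simp only [Fin.sum_univ_two] at e₀ e₁ f₀ f₁
    rw [funext_iff, Fin.forall_fin_two]
    simp only [vecMul, dotProduct, Fin.sum_univ_two, Pi.zero_apply]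
    exact ⟨by linear_combination e₁ - f₁, by linear_combination f₀ - e₀⟩
  have hd' := fun a => sub_eq_zero.mp (congrFun (eq_zero_of_vecMul_eq_zero hW hd) a)
  fin_cases b <;> fin_cases c <;> simp [hd']

theorem comp_swap_eq_of_localOp_energy_eq_zero {n : ℕ} {i₀ i₁ i₂ : Fin n} (h₀₁ : i₀ ≠ i₁)
    (h₀₂ : i₀ ≠ i₂) (h₁₂ : i₁ ≠ i₂) {M : Matrix (Fin 2 → Fin 2) (Fin 2 → Fin 2) ℂ}
    (hM : M.PosSemidef) {u : (Fin 2 → Fin 2) → ℂ} (hu : u ∈ Set.range M.mulVec)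
    (hns : u ![0, 0] * u ![1, 1] - u ![0, 1] * u ![1, 0] ≠ 0) {ψ : (Fin n → Fin 2) → ℂ}
    (hψ₁ : star ψ ⬝ᵥ localOp M ![i₀, i₁] *ᵥ ψ = 0) (hψ₂ : star ψ ⬝ᵥ localOp M ![i₀, i₂] *ᵥ ψ = 0)
    (x : Fin n → Fin 2) : ψ (x ∘ Equiv.swap i₁ i₂) = ψ x := by
  set g : Fin 2 → Fin 2 → Fin 2 → ℂ := fun a b c => ψ (update (update (update x i₀ a) i₁ b) i₂ c)
  have hW : (of fun a b => star (u ![a, b])).det ≠ 0 := by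
    rw [det_fin_two]
    simpa only [of_apply, ← star_mul', ← star_sub, star_ne_zero, mul_comm] using hns
  have hg := eq_swap_of_det_ne_zero hW (g := g)
    (fun c => by
      simpa only [g, of_apply, update_comm h₀₂, update_comm h₁₂] using
        sum_star_mul_update_eq_zero h₀₁ hM hu hψ₁ (update x i₂ c))
    (fun b => by
      simpa only [g, of_apply, update_comm h₀₁] using
        sum_star_mul_update_eq_zero h₀₂ hM hu hψ₂ (update x i₁ b))
  calc ψ (x ∘ Equiv.swap i₁ i₂) = g (x i₀) (x i₂) (x i₁) := by
        congr 1
        funext k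
        simp only [Function.comp_apply, update_apply, Equiv.swap_apply_def]
        split_ifs <;> simp_all
    _ = g (x i₀) (x i₁) (x i₂) := hg _ _ _
    _ = ψ x := by simp only [g, update_eq_self]

/-- Let `M ∈ ℂ^{4×4}` be PSD with a nonsingular vector `u` in its column
span (the 2×2 matrix of the entries of `u` has nonzero determinant).  If a state `ψ`
gives zero energy to the terms of `M` on qubit pairs `(0,1)` and `(0,2)`, then `ψ` is
invariant under swapping qubits `1` and `2`. -/
theorem stmt11 (n : ℕ) (hn : 3 ≤ n)
    (M : Matrix (Fin 2 → Fin 2) (Fin 2 → Fin 2) ℂ) (hM : M.PosSemidef)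
    (u : (Fin 2 → Fin 2) → ℂ) (hu : u ∈ Set.range M.mulVec)
    (hns : u ![0, 0] * u ![1, 1] - u ![0, 1] * u ![1, 0] ≠ 0)
    (ψ : (Fin n → Fin 2) → ℂ)
    (h12 : star ψ ⬝ᵥ (localOp M ![⟨0, by omega⟩, ⟨1, by omega⟩]).mulVec ψ = 0)
    (h13 : star ψ ⬝ᵥ (localOp M ![⟨0, by omega⟩, ⟨2, by omega⟩]).mulVec ψ = 0) :
    ∀ x : Fin n → Fin 2,
      ψ (x ∘ (Equiv.swap (⟨1, by omega⟩ : Fin n) ⟨2, by omega⟩)) = ψ x := by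
  intro x
  exact comp_swap_eq_of_localOp_energy_eq_zero (by simp [Fin.ext_iff]) (by simp [Fin.ext_iff])
    (by simp [Fin.ext_iff]) hM hu hns h12 h13 x
end
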